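/- Assume strict feasibility, i.e., Pmax·∑_k b_k > η. Then for every global minimizer (x*, α*) of (P2) there exists λ* ≥ 0 such that: (i) for every k, x*_k = h_k²/(h_k² − λ*·b_k)² if λ* < ι_k(α*) and x*_k = α*·Pmax if λ* ≥ ι_k(α*); (ii) complementary slackness holds: λ*·(η·α* − ∑_k b_k·x*_k) = 0; and (iii) (σ² + λ*·η)/Pmax = ∑_k max(0, h_k/√(Pmax·α*) − (h_k² − λ*·b_k)). -/

import Mathlib

/-!
For fixed `α`, the term `h² t - 2 h √t` is negative for small `t > 0`, so a minimizer has every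
`x k > 0` and the objective is differentiable at `x`, with partial derivatives
`d k = h k² - h k / √(x k)`. Moving `x` in a feasible direction (raising an uncapped coordinate,
lowering one when the budget constraint is slack, or trading budget between two coordinates)
cannot decrease the objective; this forces `d k / b k` to be a common value `λ ≥ 0` on the uncapped
coordinates, at most `λ` on the capped ones, and `λ = 0` when the budget is slack. Solving
`d k = λ b k` gives (i). Since `(r • x, r * α)` is feasible for every `r > 0`, the objective is
stationary at `r = 1`, i.e. `∑ h² x - ∑ h √x + α σ² = 0`; evaluating `∑ x k (λ b k - d k)` once
through this identity and once coordinatewise gives (iii).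
-/

open Finset

/-- Objective of problem (P2). -/
noncomputable def objP2 (K : ℕ) (h : Fin K → ℝ) (σ2 : ℝ)
    (x : Fin K → ℝ) (α : ℝ) : ℝ :=
  ∑ k, (h k) ^ 2 * x k - 2 * ∑ k, h k * Real.sqrt (x k) + α * σ2

/-- Feasibility for problem (P2). -/
def FeasP2 (K : ℕ) (b : Fin K → ℝ) (η Pmax : ℝ)
    (x : Fin K → ℝ) (α : ℝ) : Prop :=
  (∑ k, b k * x k) ≥ η * α ∧ (∀ k, 0 ≤ x k ∧ x k ≤ Pmax * α) ∧ 0 < α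

/-- The threshold function `ι_k(α)`. -/
noncomputable def iota (K : ℕ) (h b : Fin K → ℝ) (Pmax : ℝ)
    (k : Fin K) (α : ℝ) : ℝ :=
  (h k) ^ 2 / b k * (1 - 1 / (h k * Real.sqrt (α * Pmax)))

open Filter Topology Set Function

lemma sum_apply_update {ι : Type*} [Fintype ι] [DecidableEq ι] (f : ι → ℝ → ℝ) (x : ι → ℝ)
    (j : ι) (v : ℝ) :
    ∑ k, f k (update x j v k) = ∑ k, f k (x k) + (f j v - f j (x j)) := by
  simp only [apply_update f x j v, Finset.sum_update_of_mem (mem_univ j),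
    ← Finset.add_sum_erase _ _ (mem_univ j), Finset.sdiff_singleton_eq_erase]
  ring

lemma IsLocalMinOn.nonneg_of_hasDerivAt {f : ℝ → ℝ} {f' a : ℝ} (hmin : IsLocalMinOn f (Ici a) a)
    (hf : HasDerivAt f f' a) : 0 ≤ f' := by
  have hslope : Tendsto (slope f a) (𝓝[>] a) (𝓝 f') :=
    (hasDerivWithinAt_iff_tendsto_slope' (lt_irrefl a)).1 hf.hasDerivWithinAt
  refine ge_of_tendsto hslope ?_
  have hmin' : ∀ᶠ t in 𝓝[>] a, f a ≤ f t := nhdsWithin_mono _ Set.Ioi_subset_Ici_self hmin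
  filter_upwards [hmin', self_mem_nhdsWithin] with t ht hat
  rw [slope_def_field]
  exact div_nonneg (sub_nonneg.2 ht) (sub_nonneg.2 (le_of_lt hat))

lemma eventually_le_add_mul {a c s : ℝ} (h : c < a ∨ (c ≤ a ∧ 0 ≤ s)) :
    ∀ᶠ t in 𝓝[≥] (0 : ℝ), c ≤ a + t * s := by
  rcases h with h | ⟨h, hs⟩
  · have hcont : Tendsto (fun t : ℝ => a + t * s) (𝓝 0) (𝓝 a) := by
      simpa using ((tendsto_id (x := 𝓝 (0 : ℝ))).mul_const s).const_add a
    exact nhdsWithin_le_nhds ((hcont.eventually (lt_mem_nhds h)).mono fun _ => le_of_lt)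
  · filter_upwards [self_mem_nhdsWithin] with t (ht : 0 ≤ t)
    nlinarith

lemma exists_multiplier {ι : Type*} (free : ι → Prop) (slack : Prop) {d b : ι → ℝ}
    (hb : ∀ k, 0 < b k) (hup : ∀ k, free k → 0 ≤ d k)
    (hex : ∀ j k, free j → d k * b j ≤ d j * b k) (hdown : slack → ∀ k, d k ≤ 0)
    (hcover : (∀ k, ¬ free k) → slack) :
    ∃ lam, 0 ≤ lam ∧ (∀ k, free k → d k = lam * b k) ∧ (∀ k, d k ≤ lam * b k) ∧
      (slack → lam = 0) := by
  by_cases hfree : ∃ j, free j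
  · obtain ⟨j, hj⟩ := hfree
    have hle : ∀ k, d k ≤ d j / b j * b k := fun k => by
      rw [div_mul_eq_mul_div, le_div_iff₀ (hb j)]
      exact hex j k hj
    refine ⟨d j / b j, div_nonneg (hup j hj) (hb j).le, fun k hk => (hle k).antisymm ?_, hle,
      fun hs => div_eq_zero_iff.2 (Or.inl ((hdown hs j).antisymm (hup j hj)))⟩
    rw [div_mul_eq_mul_div, div_le_iff₀ (hb j)]
    exact hex k j hk
  · simp only [not_exists] at hfree
    exact ⟨0, le_rfl, fun k hk => absurd hk (hfree k), by simpa using hdown (hcover hfree),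
      fun _ => rfl⟩

noncomputable def coordCost (h t : ℝ) : ℝ := h ^ 2 * t - 2 * (h * √t)

noncomputable def marginalCost (h t : ℝ) : ℝ := h ^ 2 - h / √t

lemma hasDerivAt_coordCost (h : ℝ) {t : ℝ} (ht : 0 < t) :
    HasDerivAt (coordCost h) (marginalCost h t) t := by
  refine (((hasDerivAt_id' t).const_mul (h ^ 2)).sub
    (((Real.hasDerivAt_sqrt ht.ne').const_mul h).const_mul 2)).congr_deriv ?_
  have : √t ≠ 0 := by positivity
  rw [marginalCost]
  field_simp

lemma coordCost_neg {h t : ℝ} (hh : 0 < h) (ht : 0 < t) (hht : h ^ 2 * t ≤ 1) :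
    coordCost h t < 0 := by
  have hs : 0 < h * √t := by positivity
  have hsq : (h * √t) ^ 2 = h ^ 2 * t := by rw [mul_pow, Real.sq_sqrt ht.le]
  unfold coordCost
  nlinarith

lemma marginalCost_strictMonoOn {h : ℝ} (hh : 0 < h) : StrictMonoOn (marginalCost h) (Ioi 0) := by
  intro s hs t ht hst
  have : h / √t < h / √s :=
    div_lt_div_of_pos_left hh (Real.sqrt_pos.2 hs) (Real.sqrt_lt_sqrt (le_of_lt hs) hst)
  simp only [marginalCost]
  linarith

lemma mul_marginalCost (h x : ℝ) : x * marginalCost h x = h ^ 2 * x - h * √x := by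
  rw [marginalCost, mul_sub, mul_div_left_comm, Real.div_sqrt]
  ring

section Coordinate

variable {h x U μ : ℝ}

lemma eq_of_lt_marginalCost (hh : 0 < h) (hx : 0 < x) (hxU : x ≤ U)
    (hfree : x < U → marginalCost h x = μ) (hcap : marginalCost h x ≤ μ)
    (hμ : μ < marginalCost h U) : x = h ^ 2 / (h ^ 2 - μ) ^ 2 := by
  have hxU' : x < U := hxU.lt_of_ne fun hxU => by rw [hxU] at hcap; linarith
  have hsx : 0 < √x := Real.sqrt_pos.2 hx
  have hdiv : h / √x = h ^ 2 - μ := by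
    have := hfree hxU'
    rw [marginalCost] at this
    linarith
  have hsqrt : √x = h / (h ^ 2 - μ) := by
    rw [← hdiv, div_div_cancel₀ hh.ne']
  rw [← Real.sq_sqrt hx.le, hsqrt, div_pow]

lemma eq_of_marginalCost_le (hh : 0 < h) (hx : 0 < x) (hxU : x ≤ U)
    (hfree : x < U → marginalCost h x = μ) (hμ : marginalCost h U ≤ μ) : x = U := by
  by_contra hne
  have hxU' : x < U := hxU.lt_of_ne hne
  have := (marginalCost_strictMonoOn hh) hx (hx.trans hxU') hxU'
  linarith [hfree hxU']

lemma mul_sub_marginalCost_eq (hh : 0 < h) (hx : 0 < x) (hxU : x ≤ U)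
    (hfree : x < U → marginalCost h x = μ) (hcap : marginalCost h x ≤ μ) :
    x * (μ - marginalCost h x) = U * max 0 (h / √U - (h ^ 2 - μ)) := by
  rcases hxU.lt_or_eq with hxU | rfl
  · have hmono := (marginalCost_strictMonoOn hh) hx (hx.trans hxU) hxU
    rw [← hfree hxU, sub_self, mul_zero, max_eq_left, mul_zero]
    simp only [marginalCost] at hmono ⊢
    linarith
  · rw [max_eq_right (by rw [marginalCost] at hcap; linarith), marginalCost]
    ring

end Coordinate

section P2

variable {K : ℕ} {h b : Fin K → ℝ} {σ2 η Pmax : ℝ} {x : Fin K → ℝ} {α : ℝ}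

lemma objP2_eq_sum_coordCost (x : Fin K → ℝ) (α : ℝ) :
    objP2 K h σ2 x α = ∑ k, coordCost (h k) (x k) + α * σ2 := by
  simp only [objP2, coordCost, Finset.sum_sub_distrib, Finset.mul_sum]

lemma iota_mul_eq_marginalCost {k : Fin K} (hh : h k ≠ 0) (hb : b k ≠ 0) :
    iota K h b Pmax k α * b k = marginalCost (h k) (Pmax * α) := by
  rw [iota, marginalCost, mul_comm α Pmax]
  field_simp

lemma pos_of_isMin (hh : ∀ k, 0 < h k) (hb : ∀ k, 0 < b k) (hP : 0 < Pmax)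
    (hfeas : FeasP2 K b η Pmax x α)
    (hmin : ∀ y, FeasP2 K b η Pmax y α → objP2 K h σ2 x α ≤ objP2 K h σ2 y α) (k : Fin K) :
    0 < x k := by
  obtain ⟨hbud, hbox, hα⟩ := hfeas
  refine (hbox k).1.lt_of_ne' fun hk => ?_
  set t := min (Pmax * α) (1 / h k ^ 2)
  have ht : 0 < t := lt_min (by positivity) (by have := hh k; positivity)
  have hle : x ≤ update x k t := fun i => by
    rcases eq_or_ne i k with rfl | hi
    · simpa [hk] using ht.le
    · simp [hi]
  have hfeas' : FeasP2 K b η Pmax (update x k t) α := by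
    refine ⟨hbud.trans (Finset.sum_le_sum fun i _ => by gcongr; exacts [(hb i).le, hle i]),
      fun i => ?_, hα⟩
    rcases eq_or_ne i k with rfl | hi
    · simpa using ⟨ht.le, min_le_left _ _⟩
    · simpa [hi] using hbox i
  have hneg : coordCost (h k) t < 0 := by
    refine coordCost_neg (hh k) ht ?_
    have := hh k
    calc h k ^ 2 * t ≤ h k ^ 2 * (1 / h k ^ 2) := by gcongr; exact min_le_right _ _
      _ = 1 := by field_simp
  have hlt := hmin _ hfeas'
  rw [objP2_eq_sum_coordCost, objP2_eq_sum_coordCost,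
    sum_apply_update (fun k => coordCost (h k)), hk] at hlt
  simp only [coordCost, Real.sqrt_zero] at hlt hneg
  linarith

lemma feasP2_smul (hfeas : FeasP2 K b η Pmax x α) {r : ℝ} (hr : 0 < r) :
    FeasP2 K b η Pmax (r • x) (r * α) := by
  obtain ⟨hbud, hbox, hα⟩ := hfeas
  refine ⟨?_, fun k => ?_, mul_pos hr hα⟩
  · simp only [Pi.smul_apply, smul_eq_mul, mul_left_comm _ r, ← Finset.mul_sum]
    nlinarith
  · simp only [Pi.smul_apply, smul_eq_mul]
    exact ⟨mul_nonneg hr.le (hbox k).1, by nlinarith [(hbox k).2]⟩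

lemma objP2_smul (x : Fin K → ℝ) (α : ℝ) {r : ℝ} (hr : 0 ≤ r) :
    objP2 K h σ2 (r • x) (r * α) =
      r * ∑ k, h k ^ 2 * x k - 2 * (√r * ∑ k, h k * √(x k)) + r * (α * σ2) := by
  simp only [objP2, Pi.smul_apply, smul_eq_mul, Real.sqrt_mul hr, Finset.mul_sum, mul_left_comm]
  ring

/-- The objective is stationary at `r = 1` along the feasible ray `r ↦ (r • x, r * α)`. -/
lemma objP2_stationary_in_scale (hfeas : FeasP2 K b η Pmax x α)
    (hmin : ∀ y β, FeasP2 K b η Pmax y β → objP2 K h σ2 x α ≤ objP2 K h σ2 y β) :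
    ∑ k, h k ^ 2 * x k - ∑ k, h k * √(x k) + α * σ2 = 0 := by
  set A := ∑ k, h k ^ 2 * x k
  set B := ∑ k, h k * √(x k)
  have hderiv : HasDerivAt (fun r => r * A - 2 * (√r * B) + r * (α * σ2)) (A - B + α * σ2) 1 := by
    refine ((((hasDerivAt_id' 1).mul_const A).sub
      (((Real.hasDerivAt_sqrt one_ne_zero).mul_const B).const_mul 2)).add
      ((hasDerivAt_id' 1).mul_const _)).congr_deriv ?_
    simp only [Real.sqrt_one]
    ring
  have hloc : IsLocalMin (fun r => r * A - 2 * (√r * B) + r * (α * σ2)) 1 := by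
    filter_upwards [lt_mem_nhds one_pos] with r hr
    have h1 := objP2_smul (h := h) (σ2 := σ2) x α zero_le_one
    rw [one_smul, one_mul] at h1
    rw [← h1, ← objP2_smul x α hr.le]
    exact hmin _ _ (feasP2_smul hfeas hr)
  exact hloc.hasDerivAt_eq_zero hderiv

lemma eventually_feasP2_add_smul {v : Fin K → ℝ} (hfeas : FeasP2 K b η Pmax x α) (hx : ∀ k, 0 < x k)
    (hbudget : η * α < ∑ k, b k * x k ∨ 0 ≤ ∑ k, b k * v k)
    (hcap : ∀ k, x k < Pmax * α ∨ v k ≤ 0) :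
    ∀ᶠ t in 𝓝[≥] (0 : ℝ), FeasP2 K b η Pmax (x + t • v) α := by
  obtain ⟨hbud, hbox, hα⟩ := hfeas
  have hsum : ∀ t : ℝ, ∑ k, b k * (x k + t * v k) = ∑ k, b k * x k + t * ∑ k, b k * v k :=
    fun t => by simp only [mul_add, Finset.sum_add_distrib, Finset.mul_sum, mul_left_comm t]
  have hlow : ∀ k, ∀ᶠ t in 𝓝[≥] (0 : ℝ), 0 ≤ x k + t * v k :=
    fun k => eventually_le_add_mul (Or.inl (hx k))
  have hhigh : ∀ k, ∀ᶠ t in 𝓝[≥] (0 : ℝ), -(Pmax * α) ≤ -x k + t * -v k := fun k =>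
    eventually_le_add_mul
      ((hcap k).imp neg_lt_neg fun hv => ⟨neg_le_neg (hbox k).2, neg_nonneg.2 hv⟩)
  filter_upwards [eventually_le_add_mul (hbudget.imp id fun hs => ⟨hbud, hs⟩),
    eventually_all.2 hlow, eventually_all.2 hhigh] with t hbud' hlow' hhigh'
  simp only [FeasP2, Pi.add_apply, Pi.smul_apply, smul_eq_mul, hsum]
  exact ⟨hbud', fun k => ⟨hlow' k, by linarith [hhigh' k]⟩, hα⟩

lemma hasDerivAt_objP2_add_smul (hx : ∀ k, 0 < x k) (v : Fin K → ℝ) :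
    HasDerivAt (fun t : ℝ => objP2 K h σ2 (x + t • v) α)
      (∑ k, marginalCost (h k) (x k) * v k) 0 := by
  simp only [objP2_eq_sum_coordCost, Pi.add_apply, Pi.smul_apply, smul_eq_mul]
  refine (HasDerivAt.fun_sum (u := Finset.univ) fun k _ => ?_).add_const _
  have hline : HasDerivAt (fun t : ℝ => x k + t * v k) (v k) 0 := by
    simpa using ((hasDerivAt_id' (0 : ℝ)).mul_const (v k)).const_add (x k)
  exact (hasDerivAt_coordCost (h k) (hx k)).comp_of_eq 0 hline (by simp)

lemma sum_marginalCost_mul_nonneg (hfeas : FeasP2 K b η Pmax x α) (hx : ∀ k, 0 < x k)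
    (hmin : ∀ y, FeasP2 K b η Pmax y α → objP2 K h σ2 x α ≤ objP2 K h σ2 y α) (v : Fin K → ℝ)
    (hbudget : η * α < ∑ k, b k * x k ∨ 0 ≤ ∑ k, b k * v k)
    (hcap : ∀ k, x k < Pmax * α ∨ v k ≤ 0) :
    0 ≤ ∑ k, marginalCost (h k) (x k) * v k := by
  refine IsLocalMinOn.nonneg_of_hasDerivAt ?_ (hasDerivAt_objP2_add_smul (σ2 := σ2) (α := α) hx v)
  filter_upwards [eventually_feasP2_add_smul hfeas hx hbudget hcap] with t ht
  simpa using hmin _ ht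

lemma marginalCost_nonneg_of_lt (hb : ∀ k, 0 < b k) (hfeas : FeasP2 K b η Pmax x α)
    (hx : ∀ k, 0 < x k)
    (hmin : ∀ y, FeasP2 K b η Pmax y α → objP2 K h σ2 x α ≤ objP2 K h σ2 y α)
    {j : Fin K} (hj : x j < Pmax * α) :
    0 ≤ marginalCost (h j) (x j) := by
  have hcap : ∀ i, x i < Pmax * α ∨ (Pi.single j 1 : Fin K → ℝ) i ≤ 0 := fun i => by
    rcases eq_or_ne i j with rfl | hi
    exacts [Or.inl hj, Or.inr (by simp [hi])]
  simpa [Pi.single_apply] using sum_marginalCost_mul_nonneg hfeas hx hmin _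
    (Or.inr (by simpa [Pi.single_apply] using (hb j).le)) hcap

lemma marginalCost_nonpos_of_slack (hfeas : FeasP2 K b η Pmax x α) (hx : ∀ k, 0 < x k)
    (hmin : ∀ y, FeasP2 K b η Pmax y α → objP2 K h σ2 x α ≤ objP2 K h σ2 y α)
    (hslack : η * α < ∑ k, b k * x k) (k : Fin K) :
    marginalCost (h k) (x k) ≤ 0 := by
  have hcap : ∀ i, x i < Pmax * α ∨ (-Pi.single k 1 : Fin K → ℝ) i ≤ 0 := fun i => Or.inr (by
    simp only [Pi.neg_apply, Pi.single_apply]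
    split_ifs <;> norm_num)
  simpa [Pi.single_apply] using sum_marginalCost_mul_nonneg hfeas hx hmin _ (Or.inl hslack) hcap

/-- Exchange argument: move `b j` units of budget from coordinate `k` to coordinate `j`. -/
lemma marginalCost_mul_le_of_lt (hb : ∀ k, 0 < b k) (hfeas : FeasP2 K b η Pmax x α)
    (hx : ∀ k, 0 < x k)
    (hmin : ∀ y, FeasP2 K b η Pmax y α → objP2 K h σ2 x α ≤ objP2 K h σ2 y α)
    {j : Fin K} (hj : x j < Pmax * α) (k : Fin K) :
    marginalCost (h k) (x k) * b j ≤ marginalCost (h j) (x j) * b k := by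
  have hcap : ∀ i, x i < Pmax * α ∨
      (Pi.single j (b k) - Pi.single k (b j) : Fin K → ℝ) i ≤ 0 := fun i => by
    rcases eq_or_ne i j with rfl | hi
    · exact Or.inl hj
    · simp only [Pi.sub_apply, Pi.single_apply, hi, if_false, zero_sub, neg_nonpos]
      split_ifs <;> simp [(hb j).le]
  simpa [Pi.single_apply, mul_sub, Finset.sum_sub_distrib] using
    sum_marginalCost_mul_nonneg hfeas hx hmin _
      (Or.inr (by simp [Pi.single_apply, mul_sub, Finset.sum_sub_distrib, mul_comm])) hcap

lemma exists_kkt_multiplier (hb : ∀ k, 0 < b k) (hstrict : Pmax * ∑ k, b k > η)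
    (hfeas : FeasP2 K b η Pmax x α) (hx : ∀ k, 0 < x k)
    (hmin : ∀ y, FeasP2 K b η Pmax y α → objP2 K h σ2 x α ≤ objP2 K h σ2 y α) :
    ∃ lam, 0 ≤ lam ∧
      (∀ k, x k < Pmax * α → marginalCost (h k) (x k) = lam * b k) ∧
      (∀ k, marginalCost (h k) (x k) ≤ lam * b k) ∧
      lam * (η * α - ∑ k, b k * x k) = 0 := by
  obtain ⟨lam, hlam, hfree, hcap, hslack⟩ :=
    exists_multiplier (d := fun k => marginalCost (h k) (x k)) (fun k => x k < Pmax * α)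
      (η * α < ∑ k, b k * x k) hb (fun _ => marginalCost_nonneg_of_lt hb hfeas hx hmin)
      (fun _ k hj => marginalCost_mul_le_of_lt hb hfeas hx hmin hj k)
      (marginalCost_nonpos_of_slack hfeas hx hmin) fun hall => by
        have hsat : ∀ k, x k = Pmax * α := fun k => (hfeas.2.1 k).2.eq_of_not_lt (hall k)
        simp only [hsat, ← Finset.sum_mul]
        nlinarith [hfeas.2.2]
  refine ⟨lam, hlam, hfree, hcap, ?_⟩
  rcases hfeas.1.lt_or_eq with hs | hs
  · rw [hslack hs, zero_mul]
  · rw [hs, sub_self, mul_zero]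

end P2

theorem stmt_10_general (K : ℕ) (h b : Fin K → ℝ)
    (hh : ∀ k, 0 < h k) (hb : ∀ k, 0 < b k)
    (σ2 η Pmax : ℝ) (hP : 0 < Pmax)
    (hstrict : Pmax * ∑ k, b k > η)
    (x : Fin K → ℝ) (α : ℝ)
    (hfeas : FeasP2 K b η Pmax x α)
    (hmin : ∀ (y : Fin K → ℝ) (β : ℝ), FeasP2 K b η Pmax y β →
      objP2 K h σ2 x α ≤ objP2 K h σ2 y β) :
    ∃ lam : ℝ, 0 ≤ lam ∧
      -- (i) closed form of the optimal powers
      (∀ k,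
        (lam < iota K h b Pmax k α →
          x k = (h k) ^ 2 / ((h k) ^ 2 - lam * b k) ^ 2) ∧
        (iota K h b Pmax k α ≤ lam → x k = α * Pmax)) ∧
      -- (ii) complementary slackness
      lam * (η * α - ∑ k, b k * x k) = 0 ∧
      -- (iii) stationarity in α
      (σ2 + lam * η) / Pmax =
        ∑ k, max 0 (h k / Real.sqrt (Pmax * α) - ((h k) ^ 2 - lam * b k)) := by
  have hmin_x : ∀ y, FeasP2 K b η Pmax y α → objP2 K h σ2 x α ≤ objP2 K h σ2 y α :=
    fun y hy => hmin y α hy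
  have hx := pos_of_isMin hh hb hP hfeas hmin_x
  have hxU := fun k => (hfeas.2.1 k).2
  obtain ⟨lam, hlam, hfree, hcap, hcs⟩ := exists_kkt_multiplier hb hstrict hfeas hx hmin_x
  have hiota := fun k => iota_mul_eq_marginalCost (Pmax := Pmax) (α := α) (hh k).ne' (hb k).ne'
  refine ⟨lam, hlam, fun k => ⟨fun hlt => ?_, fun hge => ?_⟩, hcs, ?_⟩
  · exact eq_of_lt_marginalCost (hh k) (hx k) (hxU k) (hfree k) (hcap k)
      (by rw [← hiota]; exact mul_lt_mul_of_pos_right hlt (hb k))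
  · rw [mul_comm α]
    exact eq_of_marginalCost_le (hh k) (hx k) (hxU k) (hfree k)
      (by rw [← hiota]; exact mul_le_mul_of_nonneg_right hge (hb k).le)
  · have hmax : ∑ k, x k * (lam * b k - marginalCost (h k) (x k)) =
        Pmax * α * ∑ k, max 0 (h k / √(Pmax * α) - (h k ^ 2 - lam * b k)) := by
      rw [Finset.mul_sum]
      exact Finset.sum_congr rfl fun k _ =>
        mul_sub_marginalCost_eq (hh k) (hx k) (hxU k) (hfree k) (hcap k)
    have hexpand : ∑ k, x k * (lam * b k - marginalCost (h k) (x k)) =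
        lam * ∑ k, b k * x k - (∑ k, h k ^ 2 * x k - ∑ k, h k * √(x k)) := by
      rw [Finset.mul_sum, ← Finset.sum_sub_distrib, ← Finset.sum_sub_distrib]
      exact Finset.sum_congr rfl fun k _ => by rw [mul_sub, mul_marginalCost]; ring
    rw [div_eq_iff hP.ne']
    refine mul_left_cancel₀ hfeas.2.2.ne' ?_
    linear_combination objP2_stationary_in_scale hfeas hmin + hcs + hmax - hexpand

theorem stmt_10 (K : ℕ) (hK : 1 ≤ K) (h b : Fin K → ℝ)
    (hh : ∀ k, 0 < h k) (hb : ∀ k, 0 < b k)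
    (σ2 η Pmax : ℝ) (hσ : 0 < σ2) (hη : 0 < η) (hP : 0 < Pmax)
    (hstrict : Pmax * ∑ k, b k > η)
    (x : Fin K → ℝ) (α : ℝ)
    (hfeas : FeasP2 K b η Pmax x α)
    (hmin : ∀ (y : Fin K → ℝ) (β : ℝ), FeasP2 K b η Pmax y β →
      objP2 K h σ2 x α ≤ objP2 K h σ2 y β) :
    ∃ lam : ℝ, 0 ≤ lam ∧
      -- (i) closed form of the optimal powers
      (∀ k,
        (lam < iota K h b Pmax k α →
          x k = (h k) ^ 2 / ((h k) ^ 2 - lam * b k) ^ 2) ∧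
        (iota K h b Pmax k α ≤ lam → x k = α * Pmax)) ∧
      -- (ii) complementary slackness
      lam * (η * α - ∑ k, b k * x k) = 0 ∧
      -- (iii) stationarity in α
      (σ2 + lam * η) / Pmax =
        ∑ k, max 0 (h k / Real.sqrt (Pmax * α) - ((h k) ^ 2 - lam * b k)) :=
  stmt_10_general K h b hh hb σ2 η Pmax hP hstrict x α hfeas hmin
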